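/- arXiv:2110.13406 — 2 statements merged into one kernel-verified Lean document; each statement's English description precedes it below -/
import Mathlib

section
/- Let $\mathcal{F}_n$ be a sequence of $\sigma$-algebras and $A_n \ge 0$ a sequence of nonnegative random variables. If the conditional expectations $\mathbb{E}[A_n \mid \mathcal{F}_n]$ converge to $0$ in probability, then $A_n$ converges to $0$ in probability. -/
/-!
On the `𝓕`-measurable set `G = {E[A | 𝓕] < δ}`, Markov's inequality and the defining property of
conditional expectation give `ε μ({ε ≤ A} ∩ G) ≤ ∫_G A = ∫_G E[A | 𝓕] ≤ δ`, while `μ Gᶜ` is small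
once `E[A | 𝓕]` is small in probability. Hence `μ {ε ≤ A n} ≤ δ / ε + o(1)` for every `δ > 0`.
-/

open MeasureTheory ProbabilityTheory Filter

theorem ENNReal.tendsto_nhds_zero_of_eventually_le_ofReal_add {ι : Type*} {l : Filter ι}
    {u : ι → ENNReal}
    (h : ∀ r : ℝ, 0 < r → ∃ v : ι → ENNReal, Tendsto v l (nhds 0) ∧
      ∀ᶠ i in l, u i ≤ ENNReal.ofReal r + v i) :
    Tendsto u l (nhds 0) := by
  refine tendsto_order.2 ⟨fun _ ha => absurd ha ENNReal.not_lt_zero, fun η hη => ?_⟩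
  obtain ⟨r, -, hr_pos, hrη⟩ := ENNReal.lt_iff_exists_real_btwn.1 hη
  have hr2 : 0 < r / 2 := by
    have := ENNReal.ofReal_pos.1 hr_pos
    positivity
  obtain ⟨v, hv, hle⟩ := h (r / 2) hr2
  filter_upwards [hle, (tendsto_order.1 hv).2 _ (ENNReal.ofReal_pos.2 hr2)] with i hi hvi
  calc u i ≤ ENNReal.ofReal (r / 2) + v i := hi
    _ < ENNReal.ofReal (r / 2) + ENNReal.ofReal (r / 2) :=
        ENNReal.add_lt_add_left ENNReal.ofReal_ne_top hvi
    _ = ENNReal.ofReal r := by rw [← ENNReal.ofReal_add hr2.le hr2.le, add_halves]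
    _ < η := hrη

section CondExp

variable {Ω : Type*} {m mΩ : MeasurableSpace Ω} {μ : Measure Ω} {f : Ω → ℝ}

theorem mul_measureReal_inter_condExp_lt_le [IsFiniteMeasure μ] (hm : m ≤ mΩ)
    (hf : Integrable f μ) (hf_nonneg : 0 ≤ᵐ[μ] f) (ε δ : ℝ) :
    ε * μ.real ({ω | ε ≤ f ω} ∩ {ω | μ[f | m] ω < δ}) ≤ δ * μ.real {ω | μ[f | m] ω < δ} := by
  set G := {ω | μ[f | m] ω < δ}
  have hG : MeasurableSet[m] G := measurableSet_lt stronglyMeasurable_condExp.measurable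
    measurable_const
  have hmarkov : ε * (μ.restrict G).real {ω | ε ≤ f ω} ≤ ∫ ω in G, f ω ∂μ :=
    mul_meas_ge_le_integral_of_nonneg (ae_restrict_of_ae hf_nonneg) hf.restrict ε
  rw [measureReal_restrict_apply' (hm G hG)] at hmarkov
  calc ε * μ.real ({ω | ε ≤ f ω} ∩ G) ≤ ∫ ω in G, f ω ∂μ := hmarkov
    _ = ∫ ω in G, μ[f | m] ω ∂μ := (setIntegral_condExp hm hf hG).symm
    _ ≤ ∫ _ in G, δ ∂μ :=
        setIntegral_mono_on integrable_condExp.restrict (integrable_const δ) (hm G hG)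
          fun _ hω => le_of_lt hω
    _ = δ * μ.real G := by rw [setIntegral_const, smul_eq_mul, mul_comm]

theorem measure_le_ofReal_div_add_measure_condExp [IsProbabilityMeasure μ] (hm : m ≤ mΩ)
    (hf : Integrable f μ) (hf_nonneg : 0 ≤ᵐ[μ] f) {ε δ : ℝ} (hε : 0 < ε) (hδ : 0 ≤ δ) :
    μ {ω | ε ≤ f ω} ≤ ENNReal.ofReal (δ / ε) + μ {ω | δ ≤ μ[f | m] ω} := by
  set G := {ω | μ[f | m] ω < δ}
  have hGc : {ω | δ ≤ μ[f | m] ω} = Gᶜ := by ext; simp [G]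
  have hinter : μ ({ω | ε ≤ f ω} ∩ G) ≤ ENNReal.ofReal (δ / ε) := by
    rw [ENNReal.le_ofReal_iff_toReal_le (measure_ne_top _ _) (by positivity), le_div_iff₀ hε,
      mul_comm]
    calc ε * μ.real ({ω | ε ≤ f ω} ∩ G) ≤ δ * μ.real G :=
          mul_measureReal_inter_condExp_lt_le hm hf hf_nonneg ε δ
      _ ≤ δ * 1 := mul_le_mul_of_nonneg_left measureReal_le_one hδ
      _ = δ := mul_one δ
  calc μ {ω | ε ≤ f ω} ≤ μ ({ω | ε ≤ f ω} ∩ G) + μ ({ω | ε ≤ f ω} \ G) :=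
        measure_le_inter_add_sdiff _ _ _
    _ ≤ ENNReal.ofReal (δ / ε) + μ {ω | δ ≤ μ[f | m] ω} := by
        rw [hGc]
        exact add_le_add hinter (measure_mono (Set.sdiff_subset_compl _ _))

end CondExp

/-- If nonnegative random variables `A n` have conditional expectations
`E[A n | 𝓕 n]` (with respect to a sequence of sub-σ-algebras `𝓕 n`) converging to `0`
in probability, then `A n → 0` in probability. -/
theorem conditional_to_unconditional_convergence
    {Ω : Type*} {mΩ : MeasurableSpace Ω} {μ : Measure Ω} [IsProbabilityMeasure μ]
    (𝓕 : ℕ → MeasurableSpace Ω) (h𝓕 : ∀ n, 𝓕 n ≤ mΩ)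
    (A : ℕ → Ω → ℝ)
    (hA_int : ∀ n, Integrable (A n) μ)
    (hA_nonneg : ∀ n ω, 0 ≤ A n ω)
    (hconv : TendstoInMeasure μ (fun n => μ[A n | 𝓕 n]) atTop (fun _ => (0 : ℝ))) :
    TendstoInMeasure μ A atTop (fun _ => (0 : ℝ)) := by
  rw [tendstoInMeasure_iff_dist] at hconv ⊢
  intro ε hε
  refine ENNReal.tendsto_nhds_zero_of_eventually_le_ofReal_add fun r hr => ?_
  have hδ : 0 < ε * r := mul_pos hε hr
  refine ⟨_, hconv (ε * r) hδ, Eventually.of_forall fun n => ?_⟩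
  have hdist : ∀ x : ℝ, dist x 0 = |x| := fun x => by rw [Real.dist_eq, sub_zero]
  simp only [hdist, abs_of_nonneg (hA_nonneg n _)]
  calc μ {ω | ε ≤ A n ω}
      ≤ ENNReal.ofReal (ε * r / ε) + μ {ω | ε * r ≤ μ[A n | 𝓕 n] ω} :=
        measure_le_ofReal_div_add_measure_condExp (h𝓕 n) (hA_int n)
          (ae_of_all _ (hA_nonneg n)) hε hδ.le
    _ ≤ ENNReal.ofReal r + μ {ω | ε * r ≤ |μ[A n | 𝓕 n] ω|} := by
        rw [mul_div_cancel_left₀ r hε.ne']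
        gcongr with ω
        exact le_abs_self _
end

section
/- Let $T$ be Bernoulli($p$), $p \in (0,1)$, independent of the square-integrable vector $(X, Y(1), Y(0))$, let $\mu_w(x) = \mathbb{E}[Y(w) \mid X = x]$, and let $\phi^* = \mu_1(X) - \mu_0(X) - \tau + \frac{T}{p}(Y - \mu_1(X)) - \frac{1-T}{1-p}(Y - \mu_0(X))$ be the efficient influence function for $\tau = \mathbb{E}[Y(1) - Y(0)]$, where $Y = TY(1) + (1-T)Y(0)$. Then $\mathrm{Var}(\phi^*) = \frac{1}{p}\mathbb{E}[\mathrm{Var}(Y(1) \mid X)] + \frac{1}{1-p}\mathbb{E}[\mathrm{Var}(Y(0) \mid X)] + \mathrm{Var}(\mu_1(X) - \mu_0(X))$. -/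
/-!
Write `A = μ₁(X) - μ₀(X) - τ` and `E_w = Y(w) - μ_w(X)`. On `{T = 1}` the influence function is
`A + E₁ / p`, on `{T = 0}` it is `A - E₀ / (1 - p)`, and both branches are functions of
`(X, Y(1), Y(0))`, which is independent of `T`; so every moment of `φ*` is the `p, 1 - p`
mixture of the moments of the two branches. Each `E_w` has mean zero and is orthogonal in `L²`
to the `X`-measurable `A`, which makes `φ*` centred and reduces `E[φ*²]` to
`E[A²] + E[E₁²] / p + E[E₀²] / (1 - p)`.
-/

open MeasureTheory ProbabilityTheory

section Orthogonality

variable {Ω : Type*} {m mΩ : MeasurableSpace Ω} {μ : Measure Ω} [IsFiniteMeasure μ]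

lemma integral_mul_condExp_eq_integral_mul (hm : m ≤ mΩ) {f g : Ω → ℝ}
    (hf : StronglyMeasurable[m] f) (hf2 : MemLp f 2 μ) (hg2 : MemLp g 2 μ) :
    ∫ ω, f ω * (μ[g | m]) ω ∂μ = ∫ ω, f ω * g ω ∂μ := by
  calc ∫ ω, f ω * (μ[g | m]) ω ∂μ = ∫ ω, (μ[f * g | m]) ω ∂μ :=
        integral_congr_ae (condExp_mul_of_stronglyMeasurable_left hf
          (hf2.integrable_mul hg2) (hg2.integrable one_le_two)).symm
    _ = ∫ ω, f ω * g ω ∂μ := integral_condExp hm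

lemma integral_mul_sub_condExp_eq_zero (hm : m ≤ mΩ) {f g : Ω → ℝ}
    (hf : StronglyMeasurable[m] f) (hf2 : MemLp f 2 μ) (hg2 : MemLp g 2 μ) :
    ∫ ω, f ω * (g ω - (μ[g | m]) ω) ∂μ = 0 := by
  have hfg : Integrable (fun ω => f ω * g ω) μ := hf2.integrable_mul hg2
  have hfM : Integrable (fun ω => f ω * (μ[g | m]) ω) μ :=
    hf2.integrable_mul (hg2.condExp one_le_two)
  simp_rw [mul_sub]
  rw [integral_sub hfg hfM, integral_mul_condExp_eq_integral_mul hm hf hf2 hg2, sub_self]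

lemma integral_sub_condExp_eq_zero (hm : m ≤ mΩ) {g : Ω → ℝ} (hg : Integrable g μ) :
    ∫ ω, (g ω - (μ[g | m]) ω) ∂μ = 0 := by
  rw [integral_sub hg integrable_condExp, integral_condExp hm, sub_self]

lemma integral_add_mul_sub_condExp (hm : m ≤ mΩ) {f g : Ω → ℝ} (hf : Integrable f μ)
    (hg : Integrable g μ) (c : ℝ) :
    ∫ ω, (f ω + c * (g ω - (μ[g | m]) ω)) ∂μ = ∫ ω, f ω ∂μ := by
  have he : Integrable (fun ω => g ω - (μ[g | m]) ω) μ := hg.sub integrable_condExp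
  rw [integral_add hf (he.const_mul c), integral_const_mul,
    integral_sub_condExp_eq_zero hm hg, mul_zero, add_zero]

lemma integral_add_mul_sub_condExp_sq (hm : m ≤ mΩ) {f g : Ω → ℝ}
    (hf : StronglyMeasurable[m] f) (hf2 : MemLp f 2 μ) (hg2 : MemLp g 2 μ) (c : ℝ) :
    ∫ ω, (f ω + c * (g ω - (μ[g | m]) ω)) ^ 2 ∂μ
      = ∫ ω, f ω ^ 2 ∂μ + c ^ 2 * ∫ ω, (g ω - (μ[g | m]) ω) ^ 2 ∂μ := by
  have he2 : MemLp (fun ω => g ω - (μ[g | m]) ω) 2 μ := hg2.sub (hg2.condExp one_le_two)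
  have hfe : Integrable (fun ω => f ω * (g ω - (μ[g | m]) ω)) μ := hf2.integrable_mul he2
  have hexpand : (fun ω => (f ω + c * (g ω - (μ[g | m]) ω)) ^ 2) = fun ω =>
      f ω ^ 2 + (2 * c) * (f ω * (g ω - (μ[g | m]) ω)) + c ^ 2 * (g ω - (μ[g | m]) ω) ^ 2 := by
    funext ω; ring
  have hf2i : Integrable (fun ω => f ω ^ 2) μ := hf2.integrable_sq
  have hfirst : Integrable (fun ω => f ω ^ 2 + (2 * c) * (f ω * (g ω - (μ[g | m]) ω))) μ :=
    hf2i.add (hfe.const_mul _)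
  rw [hexpand, integral_add hfirst (he2.integrable_sq.const_mul _),
    integral_add hf2i (hfe.const_mul _),
    integral_const_mul, integral_const_mul, integral_mul_sub_condExp_eq_zero hm hf hf2 hg2]
  ring

end Orthogonality

section Bernoulli

variable {Ω : Type*} {m mT mΩ : MeasurableSpace Ω} {μ : Measure Ω}

/- `mT` is not assumed to be a sub-σ-algebra of `mΩ`: in the application it is generated by
`Y1` and `Y0`, which are only a.e. strongly measurable. -/
lemma ProbabilityTheory.Indep.setIntegral_eq_mul_of_measurable (hm : m ≤ mΩ)
    (hind : Indep m mT μ) {F : Ω → ℝ} (hF : Measurable[mT] F) (hFμ : AEMeasurable F μ) {A : Set Ω}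
    (hA : MeasurableSet[m] A) :
    ∫ ω in A, F ω ∂μ = μ.real A * ∫ ω, F ω ∂μ :=
  have hindF : Indep m (MeasurableSpace.comap F inferInstance) μ :=
    indep_of_indep_of_le_right hind hF.comap_le
  hindF.setIntegral_eq_mul (f := id) hm hFμ hA aestronglyMeasurable_id

lemma integral_ite_of_indep [IsProbabilityMeasure μ] {T : Ω → Bool} (hT : Measurable T)
    (hind : Indep (MeasurableSpace.comap T inferInstance) mT μ) {p : ℝ} (hp : 0 ≤ p)
    (hbern : μ {ω | T ω = true} = ENNReal.ofReal p) {F1 F0 : Ω → ℝ}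
    (hF1 : Measurable[mT] F1) (hF0 : Measurable[mT] F0)
    (hF1i : Integrable F1 μ) (hF0i : Integrable F0 μ) :
    ∫ ω, (if T ω then F1 ω else F0 ω) ∂μ = p * ∫ ω, F1 ω ∂μ + (1 - p) * ∫ ω, F0 ω ∂μ := by
  have hA : MeasurableSet[MeasurableSpace.comap T inferInstance] {ω | T ω = true} :=
    ⟨{true}, trivial, rfl⟩
  have hprob : μ.real {ω | T ω = true} = p := by
    rw [measureReal_def, hbern, ENNReal.toReal_ofReal hp]
  have hpiece := integral_piecewise (hT.comap_le _ hA) hF1i.integrableOn hF0i.integrableOn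
  rw [hind.setIntegral_eq_mul_of_measurable hT.comap_le hF1 hF1i.aemeasurable hA,
    hind.setIntegral_eq_mul_of_measurable hT.comap_le hF0 hF0i.aemeasurable hA.compl,
    probReal_compl_eq_one_sub (hT.comap_le _ hA), hprob] at hpiece
  exact hpiece

lemma variance_ite_of_indep [IsProbabilityMeasure μ] {T : Ω → Bool} (hT : Measurable T)
    (hind : Indep (MeasurableSpace.comap T inferInstance) mT μ) {p : ℝ} (hp : 0 ≤ p)
    (hbern : μ {ω | T ω = true} = ENNReal.ofReal p) {F1 F0 : Ω → ℝ}
    (hF1 : Measurable[mT] F1) (hF0 : Measurable[mT] F0)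
    (hF1' : MemLp F1 2 μ) (hF0' : MemLp F0 2 μ)
    (hmean : p * ∫ ω, F1 ω ∂μ + (1 - p) * ∫ ω, F0 ω ∂μ = 0) :
    variance (fun ω => if T ω then F1 ω else F0 ω) μ
      = p * ∫ ω, F1 ω ^ 2 ∂μ + (1 - p) * ∫ ω, F0 ω ^ 2 ∂μ := by
  have hs : MeasurableSet {ω | T ω = true} := hT (measurableSet_singleton true)
  have hmeas : AEMeasurable (fun ω => if T ω then F1 ω else F0 ω) μ :=
    (hF1'.1.restrict.piecewise hs hF0'.1.restrict).aemeasurable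
  have hsq : ∀ ω, (if T ω then F1 ω else F0 ω) ^ 2 = if T ω then F1 ω ^ 2 else F0 ω ^ 2 := by
    intro ω; split_ifs <;> rfl
  rw [variance_of_integral_eq_zero hmeas]
  · simp_rw [hsq]
    exact integral_ite_of_indep hT hind hp hbern (hF1.pow_const 2) (hF0.pow_const 2)
      hF1'.integrable_sq hF0'.integrable_sq
  · rw [integral_ite_of_indep hT hind hp hbern hF1 hF0 (hF1'.integrable one_le_two)
      (hF0'.integrable one_le_two), hmean]

end Bernoulli

section EfficientInfluence

variable {Ω : Type*} {m mT mΩ : MeasurableSpace Ω} {μ : Measure Ω} [IsProbabilityMeasure μ]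

theorem variance_efficientInfluence (hm : m ≤ mΩ) (hmT : m ≤ mT) {Y1 Y0 : Ω → ℝ}
    (hY1 : MemLp Y1 2 μ) (hY0 : MemLp Y0 2 μ) (hY1T : Measurable[mT] Y1)
    (hY0T : Measurable[mT] Y0) {T : Ω → Bool} (hT : Measurable T)
    (hind : Indep (MeasurableSpace.comap T inferInstance) mT μ) {p : ℝ} (hp0 : 0 < p)
    (hp1 : p < 1) (hbern : μ {ω | T ω = true} = ENNReal.ofReal p) :
    variance (fun ω =>
        (μ[Y1 | m]) ω - (μ[Y0 | m]) ω
          - ((∫ ω', Y1 ω' ∂μ) - ∫ ω', Y0 ω' ∂μ)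
          + ((if T ω then (1 : ℝ) else 0) / p) *
              ((if T ω then Y1 ω else Y0 ω) - (μ[Y1 | m]) ω)
          - ((if T ω then (0 : ℝ) else 1) / (1 - p)) *
              ((if T ω then Y1 ω else Y0 ω) - (μ[Y0 | m]) ω)) μ
      = (1 / p) * (∫ ω, (Y1 ω - (μ[Y1 | m]) ω) ^ 2 ∂μ)
        + (1 / (1 - p)) * (∫ ω, (Y0 ω - (μ[Y0 | m]) ω) ^ 2 ∂μ)
        + variance (fun ω => (μ[Y1 | m]) ω - (μ[Y0 | m]) ω) μ := by
  set M1 := μ[Y1 | m]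
  set M0 := μ[Y0 | m]
  set τ := (∫ ω, Y1 ω ∂μ) - ∫ ω, Y0 ω ∂μ
  set A : Ω → ℝ := fun ω => M1 ω - M0 ω - τ
  set F1 : Ω → ℝ := fun ω => A ω + p⁻¹ * (Y1 ω - M1 ω)
  set F0 : Ω → ℝ := fun ω => A ω + (-(1 - p)⁻¹) * (Y0 ω - M0 ω)
  have hmT' : ∀ f : Ω → ℝ, StronglyMeasurable[m] f → Measurable[mT] f :=
    fun f hf => hf.measurable.mono hmT le_rfl
  have hAm : StronglyMeasurable[m] A :=
    (stronglyMeasurable_condExp.sub stronglyMeasurable_condExp).sub stronglyMeasurable_const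
  have hA2 : MemLp A 2 μ :=
    ((hY1.condExp one_le_two).sub (hY0.condExp one_le_two)).sub (memLp_const τ)
  have hF1T : Measurable[mT] F1 := (hmT' A hAm).add
    (measurable_const.mul (hY1T.sub (hmT' M1 stronglyMeasurable_condExp)))
  have hF0T : Measurable[mT] F0 := (hmT' A hAm).add
    (measurable_const.mul (hY0T.sub (hmT' M0 stronglyMeasurable_condExp)))
  have hF1 : MemLp F1 2 μ := hA2.add ((hY1.sub (hY1.condExp one_le_two)).const_mul _)
  have hF0 : MemLp F0 2 μ := hA2.add ((hY0.sub (hY0.condExp one_le_two)).const_mul _)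
  have hDi : Integrable (fun ω => M1 ω - M0 ω) μ := integrable_condExp.sub integrable_condExp
  have hD : ∫ ω, (M1 ω - M0 ω) ∂μ = τ := by
    rw [integral_sub integrable_condExp integrable_condExp, integral_condExp hm,
      integral_condExp hm]
  have hA0 : ∫ ω, A ω ∂μ = 0 := by
    simp only [A]
    rw [integral_sub hDi (integrable_const τ), hD]
    simp
  have hvar : variance (fun ω => M1 ω - M0 ω) μ = ∫ ω, A ω ^ 2 ∂μ := by
    rw [variance_eq_integral hDi.aemeasurable, hD]
  have hφ : ∀ ω, (M1 ω - M0 ω - τ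
      + ((if T ω then (1 : ℝ) else 0) / p) * ((if T ω then Y1 ω else Y0 ω) - M1 ω)
      - ((if T ω then (0 : ℝ) else 1) / (1 - p)) * ((if T ω then Y1 ω else Y0 ω) - M0 ω))
      = if T ω then F1 ω else F0 ω := by
    intro ω
    cases T ω <;> simp only [F1, F0, A, Bool.false_eq_true, if_true, if_false] <;> ring
  have hmean : p * ∫ ω, F1 ω ∂μ + (1 - p) * ∫ ω, F0 ω ∂μ = 0 := by
    rw [integral_add_mul_sub_condExp hm (hA2.integrable one_le_two) (hY1.integrable one_le_two),
      integral_add_mul_sub_condExp hm (hA2.integrable one_le_two) (hY0.integrable one_le_two),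
      hA0]
    ring
  simp_rw [hφ]
  rw [variance_ite_of_indep hT hind hp0.le hbern hF1T hF0T hF1 hF0 hmean, hvar,
    integral_add_mul_sub_condExp_sq hm hAm hA2 hY1,
    integral_add_mul_sub_condExp_sq hm hAm hA2 hY0]
  have hp1' : 1 - p ≠ 0 := sub_ne_zero.mpr hp1.ne'
  field_simp
  ring

end EfficientInfluence

/-- With `T ~ Bernoulli(p)` independent of `(X, Y(1), Y(0))`,
`μ_w(X) = E[Y(w)|X]`, observed `Y = T Y(1) + (1-T) Y(0)`, `τ = E[Y(1) - Y(0)]`, the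
efficient influence function
`φ* = μ₁(X) - μ₀(X) - τ + (T/p)(Y - μ₁(X)) - ((1-T)/(1-p))(Y - μ₀(X))`
has variance `(1/p) E[Var(Y(1)|X)] + (1/(1-p)) E[Var(Y(0)|X)] + Var(μ₁(X) - μ₀(X))`. -/
theorem efficient_influence_function_variance
    {Ω : Type*} {mΩ : MeasurableSpace Ω} {μ : Measure Ω} [IsProbabilityMeasure μ]
    {𝓧 : Type*} [MeasurableSpace 𝓧] (X : Ω → 𝓧) (hX : Measurable X)
    (Y1 Y0 : Ω → ℝ) (hY1 : MemLp Y1 2 μ) (hY0 : MemLp Y0 2 μ)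
    (T : Ω → Bool) (hT : Measurable T)
    (p : ℝ) (hp0 : 0 < p) (hp1 : p < 1)
    (hbern : μ {ω | T ω = true} = ENNReal.ofReal p)
    (hindep : IndepFun T (fun ω => (X ω, Y1 ω, Y0 ω)) μ) :
    variance (fun ω =>
        (μ[Y1 | MeasurableSpace.comap X inferInstance]) ω
          - (μ[Y0 | MeasurableSpace.comap X inferInstance]) ω
          - ((∫ ω', Y1 ω' ∂μ) - ∫ ω', Y0 ω' ∂μ)
          + ((if T ω then (1 : ℝ) else 0) / p) *
              ((if T ω then Y1 ω else Y0 ω)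
                - (μ[Y1 | MeasurableSpace.comap X inferInstance]) ω)
          - ((if T ω then (0 : ℝ) else 1) / (1 - p)) *
              ((if T ω then Y1 ω else Y0 ω)
                - (μ[Y0 | MeasurableSpace.comap X inferInstance]) ω)) μ
      = (1 / p) * (∫ ω, (Y1 ω - (μ[Y1 | MeasurableSpace.comap X inferInstance]) ω) ^ 2 ∂μ)
        + (1 / (1 - p)) *
            (∫ ω, (Y0 ω - (μ[Y0 | MeasurableSpace.comap X inferInstance]) ω) ^ 2 ∂μ)
        + variance (fun ω =>
            (μ[Y1 | MeasurableSpace.comap X inferInstance]) ω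
              - (μ[Y0 | MeasurableSpace.comap X inferInstance]) ω) μ := by
  have hXYY : Measurable[MeasurableSpace.comap (fun ω => (X ω, Y1 ω, Y0 ω)) inferInstance]
      (fun ω => (X ω, Y1 ω, Y0 ω)) := comap_measurable _
  exact variance_efficientInfluence hX.comap_le (measurable_fst.comp hXYY).comap_le hY1 hY0
    (measurable_fst.comp (measurable_snd.comp hXYY))
    (measurable_snd.comp (measurable_snd.comp hXYY)) hT
    ((IndepFun_iff_Indep _ _ _).mp hindep) hp0 hp1 hbern
end
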